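/- arXiv:1703.08693 — 2 statements merged into one kernel-verified Lean document; each statement's English description precedes it below -/
import Mathlib

section
/- Let (P, y) be a KZ doctrine on a 2-category 𝒞 and L : A ⟶ B a 1-cell. Then L is P-admissible if and only if the 1-cell PL := lan_L, the left extension of y_B·L along y_A, has a right adjoint. -/
/-!
If `φ` exhibits `R` as a left extension of `y A` along `L`, pasting it with the invertible square
`y A ≫ lan L ≅ L ≫ y B` and with the extension `ext R` of `R` along `y B` exhibits `ext R` as a
left extension of `𝟙` along `lan L`. Admissibility says that this survives whiskering by `lan L`,
and a left extension of the identity along `lan L` that `lan L` respects is a right adjoint of it.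

Conversely, a right adjoint `g` of `lan L` is an absolute left extension of `𝟙` along `lan L`,
and `g ≅ ext (y B ≫ g)` is itself a left extension along `y B`. Reading the same pasting
backwards turns the unit of the adjunction into a left extension `φ` of `y A` along `L`; it is
respected by left extensions into a `P`-cocomplete object because there every 1-cell out of `B`
factors through `y B` up to isomorphism.
-/

open CategoryTheory Bicategory

universe w v u

variable {𝒞 : Type u} [Bicategory.{w, v} 𝒞]

/-- A 2-cell `η : I ⟶ L ≫ R` exhibits `R` as a left extension of `I` along `L` when
pasting with `η` gives a bijection between 2-cells `R ⟶ M` and 2-cells `I ⟶ L ≫ M`. -/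
def ExhibitsLeftExt {a b c : 𝒞} (L : a ⟶ b) (I : a ⟶ c) (R : b ⟶ c)
    (η : I ⟶ L ≫ R) : Prop :=
  ∀ M : b ⟶ c, Function.Bijective (fun σ : R ⟶ M => η ≫ L ◁ σ)

/-- The left extension `(R, η)` of `I` along `L` is respected by `E` when the whiskering of
`η` by `E` exhibits `R ≫ E` as a left extension of `I ≫ E` along `L`. -/
def RespectsLeftExt {a b c d : 𝒞} (L : a ⟶ b) (I : a ⟶ c) (R : b ⟶ c)
    (η : I ⟶ L ≫ R) (E : c ⟶ d) : Prop :=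
  ExhibitsLeftExt L (I ≫ E) (R ≫ E) ((η ▷ E) ≫ (α_ L R E).hom)

/-- A 2-cell `η : I ⟶ L ≫ R` exhibits `L` as a left lifting of `I` through `R` when pasting
with `η` gives a bijection between 2-cells `L ⟶ K` and 2-cells `I ⟶ K ≫ R`. -/
def ExhibitsLeftLift {a b c : 𝒞} (R : b ⟶ c) (I : a ⟶ c) (L : a ⟶ b)
    (η : I ⟶ L ≫ R) : Prop :=
  ∀ K : a ⟶ b, Function.Bijective (fun δ : L ⟶ K => η ≫ δ ▷ R)

/-- The left lifting is absolute when it is preserved by whiskering with any 1-cell `F`. -/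
def ExhibitsAbsLeftLift {a b c : 𝒞} (R : b ⟶ c) (I : a ⟶ c) (L : a ⟶ b)
    (η : I ⟶ L ≫ R) : Prop :=
  ∀ {x : 𝒞} (F : x ⟶ a),
    ExhibitsLeftLift R (F ≫ I) (F ≫ L) ((F ◁ η) ≫ (α_ F L R).inv)

/-- A 1-cell is (representably) fully faithful when whiskering by it is bijective on 2-cells. -/
def FullyFaithful1Cell {a b : 𝒞} (F : a ⟶ b) : Prop :=
  ∀ {x : 𝒞} (u v : x ⟶ a), Function.Bijective (fun σ : u ⟶ v => σ ▷ F)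

/-- A KZ doctrine on a 2-category (Marmolejo–Wood style, in terms of left extensions). -/
structure KZDoctrine (𝒞 : Type u) [Bicategory.{w, v} 𝒞] where
  /-- action on objects -/
  P : 𝒞 → 𝒞
  /-- the units -/
  y : ∀ A : 𝒞, A ⟶ P A
  /-- chosen left extensions along the units -/
  ext : ∀ {A C : 𝒞}, (A ⟶ P C) → (P A ⟶ P C)
  /-- the invertible 2-cells exhibiting the chosen left extensions -/
  c : ∀ {A C : 𝒞} (F : A ⟶ P C), F ≅ y A ≫ ext F
  ext_isLeftExt : ∀ {A C : 𝒞} (F : A ⟶ P C),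
    ExhibitsLeftExt (y A) F (ext F) (c F).hom
  /-- (a) the identity 2-cell exhibits `𝟙 (P A)` as a left extension of `y A` along `y A` -/
  y_selfExt : ∀ A : 𝒞, ExhibitsLeftExt (y A) (y A) (𝟙 (P A)) (ρ_ (y A)).inv
  /-- (b) the chosen left extensions respect each other -/
  ext_respects : ∀ {A B C : 𝒞} (F : A ⟶ P B) (G : B ⟶ P C),
    RespectsLeftExt (y A) F (ext F) (c F).hom (ext G)

/-- `lan L` (also denoted `PL`), the chosen left extension of `y B ∘ L` along `y A`. -/
abbrev KZDoctrine.lan (D : KZDoctrine 𝒞) {A B : 𝒞} (L : A ⟶ B) : D.P A ⟶ D.P B :=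
  D.ext (L ≫ D.y B)

/-- An object `X` is `P`-cocomplete when every `G : A ⟶ X` admits a left extension along
`y A` exhibited by an invertible 2-cell, and these left extensions respect the chosen left
extensions of the KZ doctrine. -/
def PCocomplete (D : KZDoctrine 𝒞) (X : 𝒞) : Prop :=
  ∀ {A : 𝒞} (G : A ⟶ X), ∃ (Gb : D.P A ⟶ X) (cG : G ≅ D.y A ≫ Gb),
    ExhibitsLeftExt (D.y A) G Gb cG.hom ∧
    ∀ {A' : 𝒞} (F : A' ⟶ D.P A),
      RespectsLeftExt (D.y A') F (D.ext F) (D.c F).hom Gb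

/-- A 1-cell is a `P`-homomorphism when it respects all left extensions along units. -/
def PHomomorphism (D : KZDoctrine 𝒞) {X Y : 𝒞} (E : X ⟶ Y) : Prop :=
  ∀ {A : 𝒞} (G : A ⟶ X) (Gb : D.P A ⟶ X) (η : G ⟶ D.y A ≫ Gb),
    ExhibitsLeftExt (D.y A) G Gb η → RespectsLeftExt (D.y A) G Gb η E

/-- The data `(R, φ)` witnesses `P`-admissibility of `L`: `φ` exhibits `R` as a left
extension of `y A` along `L`, and this left extension is respected by every left extension
`Hb : P A ⟶ X` along `y A` into every `P`-cocomplete object `X`. -/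
def AdmissibleData (D : KZDoctrine 𝒞) {A B : 𝒞} (L : A ⟶ B) (R : B ⟶ D.P A)
    (φ : D.y A ⟶ L ≫ R) : Prop :=
  ExhibitsLeftExt L (D.y A) R φ ∧
  ∀ {X : 𝒞}, PCocomplete D X →
    ∀ (H : A ⟶ X) (Hb : D.P A ⟶ X) (cH : H ≅ D.y A ≫ Hb),
      ExhibitsLeftExt (D.y A) H Hb cH.hom → RespectsLeftExt L (D.y A) R φ Hb

/-- A 1-cell `L` is `P`-admissible when some `(R, φ)` witnesses its admissibility. -/
def PAdmissible (D : KZDoctrine 𝒞) {A B : 𝒞} (L : A ⟶ B) : Prop :=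
  ∃ (R : B ⟶ D.P A) (φ : D.y A ⟶ L ≫ R), AdmissibleData D L R φ

namespace ExhibitsLeftExt

variable {a b c : 𝒞} {L : a ⟶ b} {I : a ⟶ c} {R : b ⟶ c} {η : I ⟶ L ≫ R}

theorem iff_isKan :
    ExhibitsLeftExt L I R η ↔ Nonempty (LeftExtension.mk R η).IsKan := by
  refine ⟨fun h => ⟨.mk (fun s => LeftExtension.homMk _ ((h s.extension).2 s.unit).choose_spec)
    fun s τ => ?_⟩, fun ⟨H⟩ M => ⟨fun σ σ' e => H.hom_ext e, fun τ => ⟨H.desc (.mk M τ), H.fac _⟩⟩⟩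
  ext
  exact (h s.extension).1 ((LeftExtension.w τ).trans ((h s.extension).2 s.unit).choose_spec.symm)

noncomputable def desc (h : ExhibitsLeftExt L I R η) {M : b ⟶ c} (τ : I ⟶ L ≫ M) : R ⟶ M :=
  ((h M).2 τ).choose

theorem fac (h : ExhibitsLeftExt L I R η) {M : b ⟶ c} (τ : I ⟶ L ≫ M) :
    η ≫ L ◁ h.desc τ = τ :=
  ((h M).2 τ).choose_spec

theorem hom_ext (h : ExhibitsLeftExt L I R η) {M : b ⟶ c} {σ σ' : R ⟶ M}
    (w : η ≫ L ◁ σ = η ≫ L ◁ σ') : σ = σ' :=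
  (h M).1 w

theorem of_iso {I' : a ⟶ c} {R' : b ⟶ c} (h : ExhibitsLeftExt L I R η)
    (i : I' ≅ I) (r : R ≅ R') {η' : I' ⟶ L ≫ R'}
    (w : η' = i.hom ≫ η ≫ L ◁ r.hom) : ExhibitsLeftExt L I' R' η' := by
  intro M
  have : (fun σ : R' ⟶ M => η' ≫ L ◁ σ) =
      i.homFromEquiv.symm ∘ (fun σ : R ⟶ M => η ≫ L ◁ σ) ∘ r.symm.homFromEquiv := by
    funext σ
    simp [w]
  rw [this]
  exact i.homFromEquiv.symm.bijective.comp ((h M).comp r.symm.homFromEquiv.bijective)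

theorem exists_iso {R' : b ⟶ c} {η' : I ⟶ L ≫ R'} (h : ExhibitsLeftExt L I R η)
    (h' : ExhibitsLeftExt L I R' η') : ∃ e : R ≅ R', η ≫ L ◁ e.hom = η' := by
  obtain ⟨H⟩ := iff_isKan.1 h
  obtain ⟨H'⟩ := iff_isKan.1 h'
  exact ⟨(StructuredArrow.proj _ _).mapIso (H.uniqueUpToIso H'),
    LeftExtension.w (H.uniqueUpToIso H').hom⟩

theorem respectsLeftExt_id {T : b ⟶ c} {e : I ≅ L ≫ T}
    (h : ExhibitsLeftExt L I T e.hom) : RespectsLeftExt L L (𝟙 b) (ρ_ L).inv T :=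
  h.of_iso e.symm (λ_ T).symm (by simp)

end ExhibitsLeftExt

namespace RespectsLeftExt

variable {a b c d : 𝒞} {L : a ⟶ b} {I : a ⟶ c} {R : b ⟶ c} {η : I ⟶ L ≫ R} {E : c ⟶ d}

theorem of_iso_right {E' : c ⟶ d} (h : RespectsLeftExt L I R η E) (e : E ≅ E') :
    RespectsLeftExt L I R η E' :=
  ExhibitsLeftExt.of_iso h (whiskerLeftIso I e.symm) (whiskerLeftIso R e) (by
    simp only [whiskerLeftIso_hom, Iso.symm_hom, Category.assoc]
    rw [← associator_naturality_right, ← whisker_exchange_assoc]; simp)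

theorem of_exhibitsLeftExt {R' : b ⟶ c} {η' : I ⟶ L ≫ R'} (hE : RespectsLeftExt L I R η E)
    (h : ExhibitsLeftExt L I R η) (h' : ExhibitsLeftExt L I R' η') :
    RespectsLeftExt L I R' η' E := by
  obtain ⟨e, rfl⟩ := h.exists_iso h'
  exact ExhibitsLeftExt.of_iso hE (Iso.refl _) (whiskerRightIso e E) (by simp)

theorem exhibitsLeftExt (h : RespectsLeftExt L I R η (𝟙 c)) : ExhibitsLeftExt L I R η :=
  ExhibitsLeftExt.of_iso h (ρ_ I).symm (ρ_ R) (by simp)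

end RespectsLeftExt

theorem CategoryTheory.Bicategory.Adjunction.respectsLeftExt_unit {a b c : 𝒞} {f : a ⟶ b}
    {g : b ⟶ a} (adj : f ⊣ g) (E : a ⟶ c) : RespectsLeftExt f (𝟙 a) g adj.unit E :=
  ExhibitsLeftExt.iff_isKan.2 ⟨adj.isAbsoluteLeftKan E⟩

section Pasting

variable {a a' b b' c : 𝒞} {j : a ⟶ a'} {L : a ⟶ b} {k : b ⟶ b'} {F : a' ⟶ b'}
  {I : a ⟶ c} {I' : a' ⟶ c} {R : b ⟶ c} {S : b' ⟶ c}

/-- The two ways of pasting the triangles `ι, θ` and `φ, ψ` onto the invertible square `γ`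
agree. -/
def IsPasting (γ : j ≫ F ≅ L ≫ k) (ι : I ⟶ j ≫ I') (φ : I ⟶ L ≫ R) (ψ : R ⟶ k ≫ S)
    (θ : I' ⟶ F ≫ S) : Prop :=
  ι ≫ j ◁ θ ≫ (α_ j F S).inv ≫ γ.hom ▷ S ≫ (α_ L k S).hom = φ ≫ L ◁ ψ

variable {γ : j ≫ F ≅ L ≫ k} {ι : I ⟶ j ≫ I'} {φ : I ⟶ L ≫ R} {ψ : R ⟶ k ≫ S}
  {θ : I' ⟶ F ≫ S}

namespace IsPasting

theorem comp_whiskerLeft (w : IsPasting γ ι φ ψ θ) {M : b' ⟶ c} (σ : S ⟶ M) :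
    (ι ≫ j ◁ (θ ≫ F ◁ σ)) ≫ (α_ j F M).inv ≫ γ.hom ▷ M ≫ (α_ L k M).hom =
      φ ≫ L ◁ (ψ ≫ k ◁ σ) := by
  calc _ = (ι ≫ j ◁ θ ≫ (α_ j F S).inv ≫ γ.hom ▷ S ≫ (α_ L k S).hom) ≫ L ◁ k ◁ σ := by
        simp only [Bicategory.whiskerLeft_comp, Category.assoc,
          associator_inv_naturality_right_assoc, whisker_exchange_assoc,
          associator_naturality_right]
    _ = _ := by rw [w]; simp

theorem whiskerRight (w : IsPasting γ ι φ ψ θ) {d : 𝒞} (E : c ⟶ d) :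
    IsPasting γ (ι ▷ E ≫ (α_ _ _ _).hom) (φ ▷ E ≫ (α_ _ _ _).hom) (ψ ▷ E ≫ (α_ _ _ _).hom)
      (θ ▷ E ≫ (α_ _ _ _).hom) := by
  calc _ = (ι ≫ j ◁ θ ≫ (α_ j F S).inv ≫ γ.hom ▷ S ≫ (α_ L k S).hom) ▷ E ⊗≫ 𝟙 _ := by
        bicategory
    _ = (φ ≫ L ◁ ψ) ▷ E ⊗≫ 𝟙 _ := by rw [w]
    _ = _ := by bicategory

theorem bijective_iff (w : IsPasting γ ι φ ψ θ) (hι : ExhibitsLeftExt j I I' ι)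
    (hψ : ExhibitsLeftExt k R S ψ) (M : b' ⟶ c) :
    Function.Bijective (fun σ : S ⟶ M => θ ≫ F ◁ σ) ↔
      Function.Bijective (fun τ : R ⟶ k ≫ M => φ ≫ L ◁ τ) := by
  let e : j ≫ F ≫ M ≅ L ≫ k ≫ M := (α_ j F M).symm ≪≫ whiskerRightIso γ M ≪≫ α_ L k M
  have hcomp : (e.homToEquiv ∘ fun τ : I' ⟶ F ≫ M => ι ≫ j ◁ τ) ∘
      (fun σ : S ⟶ M => θ ≫ F ◁ σ) =
      (fun τ : R ⟶ k ≫ M => φ ≫ L ◁ τ) ∘ (fun σ : S ⟶ M => ψ ≫ k ◁ σ) := by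
    funext σ
    simpa [e] using w.comp_whiskerLeft σ
  rw [← (e.homToEquiv.bijective.comp (hι _)).of_comp_iff', hcomp,
    Function.Bijective.of_comp_iff _ (hψ M)]

end IsPasting

theorem ExhibitsLeftExt.of_isPasting (w : IsPasting γ ι φ ψ θ) (hι : ExhibitsLeftExt j I I' ι)
    (hφ : ExhibitsLeftExt L I R φ) (hψ : ExhibitsLeftExt k R S ψ) :
    ExhibitsLeftExt F I' S θ :=
  fun M => (w.bijective_iff hι hψ M).2 (hφ _)

theorem ExhibitsLeftExt.of_isPasting_of_forall_iso (w : IsPasting γ ι φ ψ θ)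
    (hι : ExhibitsLeftExt j I I' ι) (hψ : ExhibitsLeftExt k R S ψ)
    (hθ : ExhibitsLeftExt F I' S θ) (hk : ∀ N : b ⟶ c, ∃ M : b' ⟶ c, Nonempty (N ≅ k ≫ M)) :
    ExhibitsLeftExt L I R φ := by
  intro N
  obtain ⟨M, ⟨e⟩⟩ := hk N
  have : (fun σ : R ⟶ N => φ ≫ L ◁ σ) = (whiskerLeftIso L e).homToEquiv.symm ∘
      (fun τ : R ⟶ k ≫ M => φ ≫ L ◁ τ) ∘ e.homToEquiv := by
    funext σ
    simp
  rw [this]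
  exact (Equiv.bijective _).comp (((w.bijective_iff hι hψ M).1 (hθ M)).comp (Equiv.bijective _))

namespace RespectsLeftExt

variable {d : 𝒞} {E : c ⟶ d}

theorem of_isPasting (w : IsPasting γ ι φ ψ θ) (hι : RespectsLeftExt j I I' ι E)
    (hφ : RespectsLeftExt L I R φ E) (hψ : RespectsLeftExt k R S ψ E) :
    RespectsLeftExt F I' S θ E :=
  ExhibitsLeftExt.of_isPasting (w.whiskerRight E) hι hφ hψ

theorem of_isPasting_of_forall_iso (w : IsPasting γ ι φ ψ θ)
    (hι : RespectsLeftExt j I I' ι E) (hψ : RespectsLeftExt k R S ψ E)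
    (hθ : RespectsLeftExt F I' S θ E) (hk : ∀ N : b ⟶ d, ∃ M : b' ⟶ d, Nonempty (N ≅ k ≫ M)) :
    RespectsLeftExt L I R φ E :=
  ExhibitsLeftExt.of_isPasting_of_forall_iso (w.whiskerRight E) hι hψ hθ hk

end RespectsLeftExt

end Pasting

theorem PCocomplete.respectsLeftExt {D : KZDoctrine 𝒞} {X A A' : 𝒞} (hX : PCocomplete D X)
    {H : A ⟶ X} {Hb : D.P A ⟶ X} {η : H ⟶ D.y A ≫ Hb} (hHb : ExhibitsLeftExt (D.y A) H Hb η)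
    (F : A' ⟶ D.P A) : RespectsLeftExt (D.y A') F (D.ext F) (D.c F).hom Hb := by
  obtain ⟨Hb₀, cH₀, hHb₀, hresp⟩ := hX H
  obtain ⟨e, -⟩ := hHb₀.exists_iso hHb
  exact (hresp F).of_iso_right e

namespace KZDoctrine

variable (D : KZDoctrine 𝒞) {A B : 𝒞} {L : A ⟶ B}

theorem pCocomplete_P (C : 𝒞) : PCocomplete D (D.P C) :=
  fun G => ⟨D.ext G, D.c G, D.ext_isLeftExt G, fun F => D.ext_respects F G⟩

noncomputable def lanUnit {R : B ⟶ D.P A} (φ : D.y A ⟶ L ≫ R) : 𝟙 (D.P A) ⟶ D.lan L ≫ D.ext R :=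
  (D.y_selfExt A).desc (φ ≫ L ◁ (D.c R).hom ≫ (α_ _ _ _).inv ≫
    (D.c (L ≫ D.y B)).hom ▷ D.ext R ≫ (α_ _ _ _).hom)

theorem isPasting_lanUnit {R : B ⟶ D.P A} (φ : D.y A ⟶ L ≫ R) :
    IsPasting (D.c (L ≫ D.y B)).symm (ρ_ (D.y A)).inv φ (D.c R).hom (D.lanUnit φ) := by
  simp only [IsPasting, lanUnit]
  rw [reassoc_of% (D.y_selfExt A).fac]
  simp

theorem lan_adjunction_of_admissibleData {R : B ⟶ D.P A} {φ : D.y A ⟶ L ≫ R}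
    (h : AdmissibleData D L R φ) : Nonempty (D.lan L ⊣ D.ext R) := by
  have w := D.isPasting_lanUnit φ
  obtain ⟨H⟩ := ExhibitsLeftExt.iff_isKan.1
    (ExhibitsLeftExt.of_isPasting w (D.y_selfExt A) h.1 (D.ext_isLeftExt R))
  obtain ⟨H'⟩ := ExhibitsLeftExt.iff_isKan.1
    (RespectsLeftExt.of_isPasting w (D.ext_isLeftExt (L ≫ D.y B)).respectsLeftExt_id
      (h.2 (D.pCocomplete_P B) _ _ _ (D.ext_isLeftExt _)) (D.ext_respects R _))
  exact ⟨H.adjunction H'⟩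

variable {D} {g : D.P B ⟶ D.P A}

def admissibleUnit (adj : D.lan L ⊣ g) : D.y A ⟶ L ≫ (D.y B ≫ g) :=
  (ρ_ (D.y A)).inv ≫ D.y A ◁ adj.unit ≫ (α_ _ _ _).inv ≫ (D.c (L ≫ D.y B)).inv ▷ g ≫
    (α_ _ _ _).hom

theorem isPasting_admissibleUnit (adj : D.lan L ⊣ g) :
    IsPasting (D.c (L ≫ D.y B)).symm (ρ_ (D.y A)).inv (admissibleUnit adj) (𝟙 (D.y B ≫ g))
      adj.unit := by
  simp [IsPasting, admissibleUnit]

/-- The comparison `θ : ext (y B ≫ g) ⟶ g` is invertible, with inverse the transpose of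
`lanUnit (admissibleUnit adj)` across the adjunction. -/
theorem exhibitsLeftExt_of_lan_adjunction (adj : D.lan L ⊣ g) :
    ExhibitsLeftExt (D.y B) (D.y B ≫ g) g (𝟙 _) := by
  have hS := D.ext_isLeftExt (D.y B ≫ g)
  have hη := (adj.respectsLeftExt_unit (𝟙 _)).exhibitsLeftExt
  set θ := hS.desc (𝟙 (D.y B ≫ g))
  have hθ : (D.c _).hom ≫ D.y B ◁ θ = 𝟙 _ := hS.fac _
  set v := D.lanUnit (admissibleUnit adj)
  have hv : v ≫ D.lan L ◁ θ = adj.unit := by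
    have key := (D.isPasting_lanUnit (admissibleUnit adj)).comp_whiskerLeft θ
    have key' := (isPasting_admissibleUnit adj).comp_whiskerLeft (𝟙 g)
    rw [hθ] at key
    simp only [Bicategory.whiskerLeft_id, Category.comp_id] at key key'
    exact (D.y_selfExt A _).1 ((cancel_mono _).1 (key.trans key'.symm))
  set θ' := hη.desc v
  have hθ'θ : θ' ≫ θ = 𝟙 g :=
    hη.hom_ext (by rw [Bicategory.whiskerLeft_comp, reassoc_of% hη.fac, hv]; simp)
  have hθ'_whisker : D.y B ◁ θ' = (D.c _).hom := by
    rw [← Iso.comp_inv_eq_id, ← (Iso.hom_comp_eq_id _).1 hθ, ← Bicategory.whiskerLeft_comp,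
      hθ'θ, Bicategory.whiskerLeft_id]
  have hθθ' : θ ≫ θ' = 𝟙 _ :=
    hS.hom_ext (by rw [Bicategory.whiskerLeft_comp, reassoc_of% hθ, hθ'_whisker]; simp)
  exact hS.of_iso (Iso.refl _) ⟨θ, θ', hθθ', hθ'θ⟩ (by simp [hθ])

theorem admissibleData_of_lan_adjunction (adj : D.lan L ⊣ g) :
    AdmissibleData D L (D.y B ≫ g) (admissibleUnit adj) := by
  have respects : ∀ {X : 𝒞}, PCocomplete D X → ∀ (H : A ⟶ X) (Hb : D.P A ⟶ X)
      (cH : H ≅ D.y A ≫ Hb), ExhibitsLeftExt (D.y A) H Hb cH.hom →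
      RespectsLeftExt L (D.y A) (D.y B ≫ g) (admissibleUnit adj) Hb :=
    fun hX _ _ _ hHb => RespectsLeftExt.of_isPasting_of_forall_iso (isPasting_admissibleUnit adj)
      hHb.respectsLeftExt_id
      ((hX.respectsLeftExt hHb _).of_exhibitsLeftExt (D.ext_isLeftExt _)
        (exhibitsLeftExt_of_lan_adjunction adj))
      (adj.respectsLeftExt_unit _)
      (fun N => let ⟨Nb, cN, _⟩ := hX N; ⟨Nb, ⟨cN⟩⟩)
  exact ⟨(respects (D.pCocomplete_P A) _ _ (ρ_ _).symm (D.y_selfExt A)).exhibitsLeftExt,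
    respects⟩

end KZDoctrine

/-- `L` is `P`-admissible iff `PL := lan L` has a right adjoint. -/
theorem stmt5 (D : KZDoctrine 𝒞) {A B : 𝒞} (L : A ⟶ B) :
    PAdmissible D L ↔
      ∃ res : D.P B ⟶ D.P A, Nonempty (Bicategory.Adjunction (D.lan L) res) :=
  ⟨fun ⟨_, _, h⟩ => ⟨_, D.lan_adjunction_of_admissibleData h⟩,
    fun ⟨_, ⟨adj⟩⟩ => ⟨_, _, KZDoctrine.admissibleData_of_lan_adjunction adj⟩⟩
end

section
/- Let (P, y) be a KZ doctrine on a 2-category 𝒞. Every 1-cell L : A ⟶ B that has a right adjoint in 𝒞 is P-admissible. -/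
open CategoryTheory Bicategory

universe w v u

variable {𝒞 : Type u} [Bicategory.{w, v} 𝒞]

/-!
If `L ⊣ R` with unit `η`, then for every `G` the 1-cell `R ≫ G` is a left extension of `G` along
`L` via `η ▷ G`: the inverse of pasting is built from the counit, and the triangle identities
make the two composites identities. Since this works for every `G`, the extension is absolute:
whiskering it by any `E` gives, up to the associator, the same construction for `G ≫ E`.
Taking `G = y A` shows that `L` is `P`-admissible, with `R_L = R ≫ y A`.
-/

theorem ExhibitsLeftExt.of_iso_s10 {a b c : 𝒞} {L : a ⟶ b} {I : a ⟶ c} {R R' : b ⟶ c}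
    {η : I ⟶ L ≫ R} (h : ExhibitsLeftExt L I R η) (e : R ≅ R') :
    ExhibitsLeftExt L I R' (η ≫ L ◁ e.hom) := by
  intro M
  have hcomp : (fun σ : R' ⟶ M => (η ≫ L ◁ e.hom) ≫ L ◁ σ)
      = (fun σ : R ⟶ M => η ≫ L ◁ σ) ∘ (e.homCongr (Iso.refl M)).symm := by
    funext σ
    simp
  rw [hcomp]
  exact (h M).comp (Equiv.bijective _)

namespace CategoryTheory.Bicategory.Adjunction

variable {a b c d : 𝒞} {L : a ⟶ b} {R : b ⟶ a}

def extUnit (adj : Adjunction L R) (G : a ⟶ c) : G ⟶ L ≫ R ≫ G :=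
  (λ_ G).inv ≫ adj.unit ▷ G ≫ (α_ L R G).hom

theorem exhibitsLeftExt_extUnit (adj : Adjunction L R) (G : a ⟶ c) :
    ExhibitsLeftExt L G (R ≫ G) (adj.extUnit G) := by
  intro M
  refine Function.bijective_iff_has_inverse.mpr
    ⟨fun τ => R ◁ τ ≫ (α_ R L M).inv ≫ adj.counit ▷ M ≫ (λ_ M).hom, fun σ => ?_, fun τ => ?_⟩
  · calc R ◁ (adj.extUnit G ≫ L ◁ σ) ≫ (α_ R L M).inv ≫ adj.counit ▷ M ≫ (λ_ M).hom
        = 𝟙 _ ⊗≫ R ◁ adj.unit ▷ G ⊗≫ ((R ≫ L) ◁ σ ≫ adj.counit ▷ M) ⊗≫ 𝟙 _ := by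
          simp only [extUnit]; bicategory
      _ = 𝟙 _ ⊗≫ (rightZigzag adj.unit adj.counit) ▷ G ⊗≫ σ := by
          rw [whisker_exchange]; bicategory
      _ = σ := by rw [adj.right_triangle]; bicategory
  · calc adj.extUnit G ≫ L ◁ (R ◁ τ ≫ (α_ R L M).inv ≫ adj.counit ▷ M ≫ (λ_ M).hom)
        = 𝟙 _ ⊗≫ (adj.unit ▷ G ≫ (L ≫ R) ◁ τ) ⊗≫ L ◁ adj.counit ▷ M ⊗≫ 𝟙 _ := by
          simp only [extUnit]; bicategory
      _ = 𝟙 _ ⊗≫ τ ⊗≫ (leftZigzag adj.unit adj.counit) ▷ M ⊗≫ 𝟙 _ := by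
          rw [← whisker_exchange]; bicategory
      _ = τ := by rw [adj.left_triangle]; bicategory

theorem respectsLeftExt_extUnit (adj : Adjunction L R) (G : a ⟶ c) (E : c ⟶ d) :
    RespectsLeftExt L G (R ≫ G) (adj.extUnit G) E := by
  unfold RespectsLeftExt
  convert (adj.exhibitsLeftExt_extUnit (G ≫ E)).of_iso_s10 (α_ R G E).symm using 1
  simp only [extUnit, Iso.symm_hom]
  bicategory

end CategoryTheory.Bicategory.Adjunction

/-- Every left adjoint 1-cell is `P`-admissible. -/
theorem stmt10 (D : KZDoctrine 𝒞) {A B : 𝒞} (L : A ⟶ B) (R : B ⟶ A)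
    (adj : Bicategory.Adjunction L R) : PAdmissible D L :=
  ⟨R ≫ D.y A, adj.extUnit (D.y A), adj.exhibitsLeftExt_extUnit (D.y A),
    fun _ _ Hb _ _ => adj.respectsLeftExt_extUnit (D.y A) Hb⟩
end
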